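/- Suppose ε is continuous with 1 < ε(z) ≤ E on γ = [−2πδ, 2πδ], q₀ = 2πδκ/cos φ satisfies (E − 1)q₀ < 1, p > 0, and t₀ = q₀(E − 1 + 3αp²) < 1. Then for U, V in the closed ball of radius p of C(γ), the operator T(U) = −AU + αF(U) + f (with A and F the integral operators with kernel k(t) = (iκ/(2cosφ))e^{2iκcos(φ)|t|} weighted by (1 − ε) and the cubic nonlinearity respectively) satisfies ‖T(U) − T(V)‖ ≤ t₀‖U − V‖. -/

import Mathlib

/-!
The kernel has constant modulus `κ / (2 cos φ)`, so integrating it over `γ`, of length `4πδ`,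
produces exactly the factor `q₀`. Pointwise, `|1 - ε| ≤ E - 1` bounds the linear part, and
`|u|²u - |v|²v = |u|²(u - v) + (|u| + |v|)(|u| - |v|) v` gives the Lipschitz constant `3p²` of
the cubic part on the ball of radius `p`.
-/

open Set MeasureTheory

theorem norm_sq_smul_sub_norm_sq_smul_le {E : Type*} [NormedAddCommGroup E] [NormedSpace ℝ E]
    {u v : E} {p : ℝ} (hu : ‖u‖ ≤ p) (hv : ‖v‖ ≤ p) :
    ‖‖u‖ ^ 2 • u - ‖v‖ ^ 2 • v‖ ≤ 3 * p ^ 2 * ‖u - v‖ := by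
  have hp : 0 ≤ p := (norm_nonneg u).trans hu
  have hsq : |‖u‖ ^ 2 - ‖v‖ ^ 2| ≤ 2 * p * ‖u - v‖ := by
    rw [sq_sub_sq, abs_mul, abs_of_nonneg (by positivity : 0 ≤ ‖u‖ + ‖v‖)]
    exact mul_le_mul (by linarith) (abs_norm_sub_norm_le u v) (abs_nonneg _) (by positivity)
  calc ‖‖u‖ ^ 2 • u - ‖v‖ ^ 2 • v‖ = ‖‖u‖ ^ 2 • (u - v) + (‖u‖ ^ 2 - ‖v‖ ^ 2) • v‖ := by
        rw [smul_sub, sub_smul, sub_add_sub_cancel]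
    _ ≤ ‖u‖ ^ 2 * ‖u - v‖ + |‖u‖ ^ 2 - ‖v‖ ^ 2| * ‖v‖ := by
        refine (norm_add_le _ _).trans_eq ?_
        rw [norm_smul, norm_smul, Real.norm_of_nonneg (by positivity), Real.norm_eq_abs]
    _ ≤ p ^ 2 * ‖u - v‖ + 2 * p * ‖u - v‖ * p := by gcongr
    _ = 3 * p ^ 2 * ‖u - v‖ := by ring

theorem norm_integral_mul_sub_integral_mul_le {A : Type*} [NormedRing A] [NormedSpace ℝ A]
    {k g h : ℝ → A} {a b K C : ℝ} (hab : a ≤ b)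
    (hkg : IntervalIntegrable (fun x => k x * g x) volume a b)
    (hkh : IntervalIntegrable (fun x => k x * h x) volume a b)
    (hk : ∀ x ∈ Ioc a b, ‖k x‖ ≤ K) (hgh : ∀ x ∈ Ioc a b, ‖g x - h x‖ ≤ C) :
    ‖(∫ x in a..b, k x * g x) - ∫ x in a..b, k x * h x‖ ≤ K * C * (b - a) := by
  rw [← intervalIntegral.integral_sub hkg hkh, ← abs_of_nonneg (sub_nonneg.2 hab)]
  refine intervalIntegral.norm_integral_le_of_norm_le_const fun x hx => ?_
  rw [uIoc_of_le hab] at hx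
  rw [← mul_sub]
  exact (norm_mul_le _ _).trans
    (mul_le_mul (hk x hx) (hgh x hx) (norm_nonneg _) ((norm_nonneg _).trans (hk x hx)))

/-- The kernel `k` of the operators `A` and `F`. -/
noncomputable def integralKernel (κ φ t : ℝ) : ℂ :=
  Complex.I * κ / (2 * Real.cos φ) * Complex.exp (2 * Complex.I * κ * Real.cos φ * |t|)

theorem continuous_integralKernel (κ φ : ℝ) : Continuous (integralKernel κ φ) := by
  unfold integralKernel; fun_prop

theorem norm_integralKernel (κ φ t : ℝ) : ‖integralKernel κ φ t‖ = |κ / (2 * Real.cos φ)| := by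
  have h : 2 * Complex.I * κ * Real.cos φ * |t| =
      ((2 * κ * Real.cos φ * |t| : ℝ) : ℂ) * Complex.I := by
    push_cast; ring
  rw [integralKernel, h, norm_mul, Complex.norm_exp_ofReal_mul_I, mul_one]
  simp [abs_div, -Complex.ofReal_cos]

theorem norm_ofReal_one_sub_mul_sub_le {e E M : ℝ} {u v : ℂ} (he : 1 < e) (heE : e ≤ E)
    (huv : ‖u - v‖ ≤ M) : ‖((1 - e : ℝ) : ℂ) * u - ((1 - e : ℝ) : ℂ) * v‖ ≤ (E - 1) * M := by
  rw [← mul_sub, norm_mul, Complex.norm_real, Real.norm_eq_abs, abs_of_neg (by linarith)]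
  exact mul_le_mul (by linarith) huv (norm_nonneg _) (by linarith)

theorem norm_neg_add_mul_add_sub_le {A A' B B' c : ℂ} {α : ℝ} (hα : 0 ≤ α) :
    ‖(-A + α * B + c) - (-A' + α * B' + c)‖ ≤ ‖A - A'‖ + α * ‖B - B'‖ := by
  calc ‖(-A + α * B + c) - (-A' + α * B' + c)‖ = ‖(A' - A) + α * (B - B')‖ := by ring_nf
    _ ≤ ‖A' - A‖ + ‖(α : ℂ) * (B - B')‖ := norm_add_le _ _
    _ = ‖A - A'‖ + α * ‖B - B'‖ := by
      rw [norm_sub_rev, norm_mul, Complex.norm_real, Real.norm_of_nonneg hα]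

theorem stmt_7 (δ κ φ E α p : ℝ) (hκ : 0 < κ) (hφ : |φ| < Real.pi / 2)
    (hα : 0 < α)
    (q₀ : ℝ) (hq₀ : q₀ = 2 * Real.pi * δ * κ / Real.cos φ)
    (ε : ℝ → ℝ) (hε : Continuous ε)
    (hεb : ∀ z ∈ Set.Icc (-(2 * Real.pi * δ)) (2 * Real.pi * δ), 1 < ε z ∧ ε z ≤ E)
    (f : ℝ → ℂ)
    (U V : ℝ → ℂ) (hU : Continuous U) (hV : Continuous V)
    (hUp : ∀ z ∈ Set.Icc (-(2 * Real.pi * δ)) (2 * Real.pi * δ), ‖U z‖ ≤ p)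
    (hVp : ∀ z ∈ Set.Icc (-(2 * Real.pi * δ)) (2 * Real.pi * δ), ‖V z‖ ≤ p)
    (M : ℝ)
    (hM : ∀ z ∈ Set.Icc (-(2 * Real.pi * δ)) (2 * Real.pi * δ), ‖U z - V z‖ ≤ M) :
    ∀ z ∈ Set.Icc (-(2 * Real.pi * δ)) (2 * Real.pi * δ),
      ‖(-(∫ z₀ in (-(2 * Real.pi * δ))..(2 * Real.pi * δ),
            (Complex.I * κ / (2 * Real.cos φ)) *
              Complex.exp (2 * Complex.I * κ * Real.cos φ * |z - z₀|) *
              ((1 - ε z₀ : ℝ) : ℂ) * U z₀)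
          + α * (∫ z₀ in (-(2 * Real.pi * δ))..(2 * Real.pi * δ),
              (Complex.I * κ / (2 * Real.cos φ)) *
                Complex.exp (2 * Complex.I * κ * Real.cos φ * |z - z₀|) *
                ((‖U z₀‖ ^ 2 : ℝ) : ℂ) * U z₀)
          + f z)
        - (-(∫ z₀ in (-(2 * Real.pi * δ))..(2 * Real.pi * δ),
              (Complex.I * κ / (2 * Real.cos φ)) *
                Complex.exp (2 * Complex.I * κ * Real.cos φ * |z - z₀|) *
                ((1 - ε z₀ : ℝ) : ℂ) * V z₀)
            + α * (∫ z₀ in (-(2 * Real.pi * δ))..(2 * Real.pi * δ),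
                (Complex.I * κ / (2 * Real.cos φ)) *
                  Complex.exp (2 * Complex.I * κ * Real.cos φ * |z - z₀|) *
                  ((‖V z₀‖ ^ 2 : ℝ) : ℂ) * V z₀)
            + f z)‖ ≤
      q₀ * (E - 1 + 3 * α * p ^ 2) * M := by
  intro z hz
  set a := 2 * Real.pi * δ
  have hcos : 0 < Real.cos φ := Real.cos_pos_of_mem_Ioo (abs_lt.mp hφ)
  simp only [← integralKernel.eq_1]
  simp only [mul_assoc (integralKernel _ _ _)]
  have hint : ∀ g : ℝ → ℂ, Continuous g →
      IntervalIntegrable (fun x => integralKernel κ φ (z - x) * g x) volume (-a) a :=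
    fun g hg => ((continuous_integralKernel κ φ).comp (continuous_const.sub continuous_id)).mul
      hg |>.intervalIntegrable _ _
  have hkernel : ∀ x ∈ Ioc (-a) a, ‖integralKernel κ φ (z - x)‖ ≤ |κ / (2 * Real.cos φ)| :=
    fun x _ => (norm_integralKernel κ φ _).le
  have hlin := norm_integral_mul_sub_integral_mul_le (g := fun x => ((1 - ε x : ℝ) : ℂ) * U x)
    (h := fun x => ((1 - ε x : ℝ) : ℂ) * V x) (C := (E - 1) * M) (hz.1.trans hz.2)
    (hint _ (by fun_prop)) (hint _ (by fun_prop)) hkernel fun x hx => by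
      have hx := Ioc_subset_Icc_self hx
      exact norm_ofReal_one_sub_mul_sub_le (hεb x hx).1 (hεb x hx).2 (hM x hx)
  have hcub := norm_integral_mul_sub_integral_mul_le (g := fun x => ((‖U x‖ ^ 2 : ℝ) : ℂ) * U x)
    (h := fun x => ((‖V x‖ ^ 2 : ℝ) : ℂ) * V x) (C := 3 * p ^ 2 * M) (hz.1.trans hz.2)
    (hint _ (by fun_prop)) (hint _ (by fun_prop)) hkernel fun x hx => by
      have hx := Ioc_subset_Icc_self hx
      simpa only [Complex.real_smul] using
        (norm_sq_smul_sub_norm_sq_smul_le (hUp x hx) (hVp x hx)).trans (by gcongr; exact hM x hx)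
  refine (norm_neg_add_mul_add_sub_le hα.le).trans ?_
  calc _ ≤ |κ / (2 * Real.cos φ)| * ((E - 1) * M) * (a - -a) +
        α * (|κ / (2 * Real.cos φ)| * (3 * p ^ 2 * M) * (a - -a)) :=
        add_le_add hlin (mul_le_mul_of_nonneg_left hcub hα.le)
    _ = q₀ * (E - 1 + 3 * α * p ^ 2) * M := by
      rw [abs_of_pos (by positivity), hq₀]
      field_simp
      ring
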